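/- arXiv:2012.02739 — 2 statements merged into one kernel-verified Lean document; each statement's English description precedes it below -/
import Mathlib

section
/- Let A be a commutative Q-algebra and K = A[x₁,…,x_N] ⊗ Λ(y₁,…,y_N) with differential d given by multiplication by Σᵢ xᵢ yᵢ. Then the element y₁ y₂ ⋯ y_N lies in the kernel of d but not in the image of d. -/
/-!
Multiplication by `∑ xᵢ yᵢ` raises the exterior degree, so it kills the top exterior monomial;
and it lands in the ideal `(x₁, …, x_N)`, so no boundary has coefficient `1` at `y₁ ⋯ y_N`.
-/

open MvPolynomial Finset

noncomputable section

/-- Model of `A[x₁,…,x_N] ⊗ Λ(y₁,…,y_N)`: a family of polynomial coefficients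
indexed by exterior monomials `y_S`, `S ⊆ {1,…,N}`. -/
abbrev Kos (A : Type) [CommRing A] (N : ℕ) : Type :=
  Finset (Fin N) → MvPolynomial (Fin N) A

/-- Koszul sign `(-1)^{#{j ∈ S : j < i}}` for inserting/removing `yᵢ` in `y_S`. -/
def insSgn {N : ℕ} (i : Fin N) (S : Finset (Fin N)) : ℤ :=
  (-1) ^ (S.filter (· < i)).card

/-- Multiplication by the element `∑ᵢ xᵢ ⊗ yᵢ` (raises exterior degree by 1). -/
def kosD {A : Type} [CommRing A] {N : ℕ} (f : Kos A N) : Kos A N :=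
  fun S => ∑ i ∈ S, insSgn i (S.erase i) • (X i * f (S.erase i))

section

variable {A : Type} [CommRing A] {N : ℕ}

theorem kosD_eq_zero_of_forall_ne_univ (f : Kos A N) (hf : ∀ S, S ≠ univ → f S = 0) :
    kosD f = 0 := by
  funext S
  refine sum_eq_zero fun i _ => ?_
  have hne : S.erase i ≠ univ := fun h => notMem_erase i S (h ▸ mem_univ i)
  rw [hf _ hne, mul_zero, smul_zero]

theorem constantCoeff_kosD (f : Kos A N) (S : Finset (Fin N)) :
    constantCoeff (kosD f S) = 0 := by
  simp only [kosD, map_sum, map_zsmul, map_mul, constantCoeff_X, zero_mul, smul_zero,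
    sum_const_zero]

end

theorem stmt_3_general (A : Type) [CommRing A] [Nontrivial A] (N : ℕ)
    (top : Kos A N) (htop : top = fun S => if S = Finset.univ then 1 else 0) :
    kosD top = 0 ∧ ¬ ∃ g : Kos A N, kosD g = top := by
  subst htop
  refine ⟨kosD_eq_zero_of_forall_ne_univ _ fun S hS => if_neg hS, ?_⟩
  rintro ⟨g, hg⟩
  simpa [hg] using constantCoeff_kosD g univ

/-- `y₁⋯y_N` is a cycle for `d` but not a boundary. -/
theorem stmt_3 (A : Type) [CommRing A] [Nontrivial A] [Algebra ℚ A] (N : ℕ)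
    (top : Kos A N) (htop : top = fun S => if S = Finset.univ then 1 else 0) :
    kosD top = 0 ∧ ¬ ∃ g : Kos A N, kosD g = top :=
  stmt_3_general A N top htop
end
end

section
/- Let A be a commutative ring and K = A[x₁,…,x_N] ⊗ Λ(y₁,…,y_N) with d : K → K given by multiplication by Σᵢ xᵢ yᵢ. Then the kernel of d equals the ideal of K generated by the two elements Σᵢ xᵢ yᵢ and y₁⋯y_N, provided A is a Q-algebra. -/
/-!
The contraction `h = ∑ⱼ ∂/∂xⱼ ∘ ι_{yⱼ}` satisfies the Cartan–Euler identity `dh + hd = L`,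
where `L` multiplies `x^μ y_S` by its weight `N - |S| + |μ|`. Since `d` preserves weights, `L`
commutes with `d`; the weight vanishes only on the constants times `y₁⋯y_N`, and over a
`ℚ`-algebra `L` can be inverted on all other weights. Hence a cycle `f` equals `d (h (L⁻¹ f))`
plus its constant coefficient on `y₁⋯y_N`. Conversely `d² = 0` and `d (y₁⋯y_N) = 0`.
-/

open MvPolynomial Finset

noncomputable section

section ScaleMonomials

variable {σ R : Type*} [CommSemiring R]

def scaleMonomials (c : (σ →₀ ℕ) → R) : MvPolynomial σ R →ₗ[R] MvPolynomial σ R :=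
  Finsupp.lsum ℕ (fun μ => c μ • monomial μ) ∘ₗ (AddMonoidAlgebra.coeffLinearEquiv R).toLinearMap

theorem scaleMonomials_monomial (c : (σ →₀ ℕ) → R) (μ : σ →₀ ℕ) (a : R) :
    scaleMonomials c (monomial μ a) = monomial μ (c μ * a) := by
  simp [scaleMonomials, smul_monomial]

theorem coeff_scaleMonomials (c : (σ →₀ ℕ) → R) (ν : σ →₀ ℕ) (p : MvPolynomial σ R) :
    coeff ν (scaleMonomials c p) = c ν * coeff ν p := by
  classical
  induction p using MvPolynomial.induction_on' with
  | monomial μ a =>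
    rw [scaleMonomials_monomial, coeff_monomial, coeff_monomial]
    split_ifs with h <;> simp [h]
  | add p q hp hq => rw [map_add, coeff_add, coeff_add, hp, hq, mul_add]

theorem scaleMonomials_scaleMonomials (c c' : (σ →₀ ℕ) → R) (p : MvPolynomial σ R) :
    scaleMonomials c (scaleMonomials c' p) = scaleMonomials (fun μ => c μ * c' μ) p := by
  ext ν
  simp only [coeff_scaleMonomials, mul_assoc]

theorem scaleMonomials_X_mul (c : (σ →₀ ℕ) → R) (i : σ) (p : MvPolynomial σ R) :
    scaleMonomials c (X i * p) = X i * scaleMonomials (fun μ => c (μ + Finsupp.single i 1)) p := by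
  induction p using MvPolynomial.induction_on' with
  | monomial μ a =>
    rw [scaleMonomials_monomial, X, monomial_mul, monomial_mul, scaleMonomials_monomial, one_mul,
      one_mul, add_comm]
  | add p q hp hq => rw [mul_add, map_add, hp, hq, map_add, mul_add]

theorem sum_X_mul_pderiv_eq_scaleMonomials [Fintype σ] (p : MvPolynomial σ R) :
    ∑ i, X i * pderiv i p = scaleMonomials (fun μ => (μ.degree : R)) p := by
  induction p using MvPolynomial.induction_on' with
  | monomial μ a =>
    simp only [X_mul_pderiv_monomial, smul_monomial, nsmul_eq_mul, scaleMonomials_monomial]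
    rw [← map_sum, ← sum_mul, ← Nat.cast_sum, Finsupp.degree_eq_sum]
  | add p q hp hq => simp only [map_add, mul_add, sum_add_distrib, hp, hq]

theorem nsmul_add_sum_X_mul_pderiv [Fintype σ] (n : ℕ) (p : MvPolynomial σ R) :
    n • p + ∑ i, X i * pderiv i p = scaleMonomials (fun μ => ((n + μ.degree : ℕ) : R)) p := by
  ext ν
  rw [sum_X_mul_pderiv_eq_scaleMonomials, coeff_add, coeff_smul, coeff_scaleMonomials,
    coeff_scaleMonomials, nsmul_eq_mul, Nat.cast_add, add_mul]

end ScaleMonomials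

theorem Finset.sum_sum_erase_eq_zero {ι M : Type*} [DecidableEq ι] [AddCommGroup M]
    (S : Finset ι) (F : ι → ι → M) (hF : ∀ i ∈ S, ∀ j ∈ S, i ≠ j → F i j = -F j i) :
    ∑ i ∈ S, ∑ j ∈ S.erase i, F i j = 0 := by
  rw [sum_sigma']
  refine sum_involution (fun x _ => ⟨x.2, x.1⟩) (fun x hx => ?_) (fun x hx _ => ?_)
    (fun x hx => ?_) (fun _ _ => rfl)
  all_goals obtain ⟨hji, hj⟩ := mem_erase.1 (mem_sigma.1 hx).2
  · rw [hF _ (mem_sigma.1 hx).1 _ hj (Ne.symm hji), neg_add_cancel]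
  · exact fun h => hji (congrArg Sigma.fst h)
  · exact mem_sigma.2 ⟨hj, mem_erase.2 ⟨Ne.symm hji, (mem_sigma.1 hx).1⟩⟩

theorem card_compl_add_degree_eq_zero {α : Type*} [Fintype α] [DecidableEq α] {S : Finset α}
    {μ : α →₀ ℕ} : Sᶜ.card + μ.degree = 0 ↔ S = univ ∧ μ = 0 := by
  simp [Finsupp.degree_eq_zero_iff]

theorem natCast_mul_algebraMap_inv {R : Type*} [Semiring R] [Algebra ℚ R] (n : ℕ) :
    (n : R) * algebraMap ℚ R (n : ℚ)⁻¹ = if n = 0 then 0 else 1 := by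
  split_ifs with hn
  · simp [hn]
  · rw [← map_natCast (algebraMap ℚ R), ← map_mul, mul_inv_cancel₀ (by exact_mod_cast hn), map_one]

section Koszul

variable {N : ℕ}

theorem insSgn_mul_self (i : Fin N) (T : Finset (Fin N)) : insSgn i T * insSgn i T = 1 := by
  rw [insSgn, ← pow_add, Even.neg_one_pow ⟨_, rfl⟩]

theorem insSgn_insert {i j : Fin N} {U : Finset (Fin N)} (hi : i ∉ U) :
    insSgn j (insert i U) = (if i < j then -1 else 1) * insSgn j U := by
  unfold insSgn
  rw [filter_insert]
  split_ifs with h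
  · rw [card_insert_of_notMem fun hm => hi (mem_filter.1 hm).1, pow_succ, mul_comm]
  · rw [one_mul]

theorem insSgn_insert_mul_insSgn {i j : Fin N} {U : Finset (Fin N)} (hi : i ∉ U) (hj : j ∉ U)
    (hij : i ≠ j) : insSgn i (insert j U) * insSgn j U = -(insSgn j (insert i U) * insSgn i U) := by
  rw [insSgn_insert hj, insSgn_insert hi]
  rcases hij.lt_or_gt with h | h <;> simp [h, h.not_gt, mul_comm]

theorem insSgn_mul_insSgn {i j : Fin N} {U : Finset (Fin N)} (hi : i ∉ U) (hj : j ∉ U)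
    (hij : i ≠ j) : insSgn i U * insSgn j U = -(insSgn j (insert i U) * insSgn i (insert j U)) := by
  rw [insSgn_insert hj, insSgn_insert hi]
  rcases hij.lt_or_gt with h | h <;> simp [h, h.not_gt, mul_comm]

variable {A : Type} [CommRing A]

theorem kosD_add (f g : Kos A N) : kosD (f + g) = kosD f + kosD g := by
  funext S
  simp only [kosD, Pi.add_apply, mul_add, smul_add, sum_add_distrib]

theorem kosD_top (p : MvPolynomial (Fin N) A) :
    kosD (fun S => if S = univ then p else 0) = 0 := by
  funext S
  refine sum_eq_zero fun i _ => ?_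
  have hne : S.erase i ≠ univ := fun h => notMem_erase i S (h ▸ mem_univ i)
  simp only [if_neg hne, mul_zero, smul_zero]

theorem kosD_kosD (g : Kos A N) : kosD (kosD g) = 0 := by
  funext S
  simp only [kosD, mul_sum, smul_sum, mul_smul_comm, smul_smul, Pi.zero_apply]
  refine sum_sum_erase_eq_zero S _ fun i hi j hj hij => ?_
  set U := (S.erase i).erase j
  have hiU : i ∉ U := fun h => notMem_erase i S (mem_of_mem_erase h)
  have hjU : j ∉ U := notMem_erase j _
  have hSi : S.erase i = insert j U := (insert_erase (mem_erase.2 ⟨hij.symm, hj⟩)).symm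
  have hSj : S.erase j = insert i U := by
    rw [show U = (S.erase j).erase i from erase_right_comm, insert_erase (mem_erase.2 ⟨hij, hi⟩)]
  rw [hSi, hSj, erase_insert hiU, insSgn_insert_mul_insSgn hiU hjU hij, neg_smul,
    mul_left_comm (X i)]

/-- `Sᶜ.card + μ.degree` is the weight `N - |S| + |μ|` of `x^μ y_S`, which `kosD` preserves. -/
def kosScale (w : ℕ → A) (f : Kos A N) : Kos A N :=
  fun S => scaleMonomials (fun μ => w (Sᶜ.card + μ.degree)) (f S)

theorem kosScale_zero (w : ℕ → A) : kosScale w (0 : Kos A N) = 0 :=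
  funext fun _ => map_zero _

theorem kosScale_kosScale (w w' : ℕ → A) (f : Kos A N) :
    kosScale w (kosScale w' f) = kosScale (fun n => w n * w' n) f :=
  funext fun _ => scaleMonomials_scaleMonomials _ _ _

theorem kosD_kosScale (w : ℕ → A) (f : Kos A N) : kosD (kosScale w f) = kosScale w (kosD f) := by
  funext S
  simp only [kosD, kosScale, map_sum, map_zsmul, scaleMonomials_X_mul]
  refine sum_congr rfl fun i hi => ?_
  have hcard : (S.erase i)ᶜ.card = Sᶜ.card + 1 := by
    rw [compl_erase, card_insert_of_notMem (by simpa using hi)]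
  simp only [hcard, map_add, Finsupp.degree_single, add_assoc, add_comm 1]

/-- The contracting homotopy `∑ⱼ ∂/∂xⱼ ∘ ι_{yⱼ}`. -/
def kosH (f : Kos A N) : Kos A N :=
  fun S => ∑ j ∈ Sᶜ, insSgn j S • pderiv j (f (insert j S))

theorem kosH_zero : kosH (0 : Kos A N) = 0 := by
  funext S
  simp [kosH]

theorem kosD_kosH_apply (f : Kos A N) (S : Finset (Fin N)) :
    kosD (kosH f) S = ∑ i ∈ S, X i * pderiv i (f S) +
      ∑ i ∈ S, ∑ j ∈ Sᶜ, (insSgn i (S.erase i) * insSgn j (S.erase i)) •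
        (X i * pderiv j (f (insert j (S.erase i)))) := by
  rw [← sum_add_distrib]
  refine sum_congr rfl fun i hi => ?_
  rw [kosH, compl_erase, sum_insert (by simpa using hi), insert_erase hi, mul_add, smul_add,
    mul_smul_comm, smul_smul, insSgn_mul_self, one_smul, mul_sum, smul_sum]
  simp only [mul_smul_comm, smul_smul]

theorem kosH_kosD_apply (f : Kos A N) (S : Finset (Fin N)) :
    kosH (kosD f) S = ∑ j ∈ Sᶜ, (f S + X j * pderiv j (f S)) +
      ∑ j ∈ Sᶜ, ∑ i ∈ S, (insSgn j S * insSgn i (insert j (S.erase i))) •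
        (X i * pderiv j (f (insert j (S.erase i)))) := by
  rw [← sum_add_distrib]
  refine sum_congr rfl fun j hj => ?_
  have hjS : j ∉ S := by simpa using hj
  rw [kosD, sum_insert hjS, erase_insert hjS, map_add, map_zsmul, smul_add, smul_smul,
    insSgn_mul_self, one_smul, pderiv_mul, pderiv_X_self, one_mul, add_comm (f S), map_sum,
    smul_sum]
  congr 1
  refine sum_congr rfl fun i hi => ?_
  have hij : i ≠ j := fun h => hjS (h ▸ hi)
  rw [erase_insert_of_ne hij.symm, map_zsmul, smul_smul, pderiv_mul, pderiv_X_of_ne hij, zero_mul,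
    zero_add]

theorem kosD_kosH_add_kosH_kosD (f : Kos A N) :
    kosD (kosH f) + kosH (kosD f) = kosScale (fun n => (n : A)) f := by
  funext S
  have hcross : ∑ i ∈ S, ∑ j ∈ Sᶜ, (insSgn i (S.erase i) * insSgn j (S.erase i)) •
        (X i * pderiv j (f (insert j (S.erase i)))) =
      -∑ j ∈ Sᶜ, ∑ i ∈ S, (insSgn j S * insSgn i (insert j (S.erase i))) •
        (X i * pderiv j (f (insert j (S.erase i)))) := by
    rw [sum_comm, ← sum_neg_distrib]
    refine sum_congr rfl fun j hj => ?_
    rw [← sum_neg_distrib]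
    refine sum_congr rfl fun i hi => ?_
    have hjS : j ∉ S := by simpa using hj
    rw [← neg_smul, ← insert_erase hi, erase_insert (notMem_erase i S),
      insSgn_mul_insSgn (notMem_erase i S) (fun h => hjS (mem_of_mem_erase h))
        fun h => hjS (h ▸ hi)]
  rw [Pi.add_apply, kosD_kosH_apply, kosH_kosD_apply, hcross, sum_add_distrib, sum_const,
    kosScale, ← nsmul_add_sum_X_mul_pderiv, ← sum_add_sum_compl S]
  abel

theorem eq_kosScale_add_top (f : Kos A N) :
    f = kosScale (fun n => if n = 0 then 0 else 1) f +
      fun S => if S = univ then C (coeff 0 (f univ)) else 0 := by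
  funext S
  ext μ
  simp only [Pi.add_apply, kosScale, coeff_add, coeff_scaleMonomials, card_compl_add_degree_eq_zero]
  by_cases hS : S = univ <;> by_cases hμ : μ = 0 <;> simp [hS, hμ, coeff_C, eq_comm]

end Koszul

/- The ideal `(∑ᵢ xᵢ yᵢ, y₁⋯y_N)` of `K` is `im d + A[x₁,…,x_N] · y₁⋯y_N`, since `im d` consists
of the `K`-multiples of `∑ᵢ xᵢ yᵢ` and the `K`-multiples of `y₁⋯y_N` are its `A[x]`-multiples. -/
/-- the kernel of `d` is the ideal of `K` generated by
`∑ᵢ xᵢ yᵢ` and `y₁⋯y_N`.  Since `im(d)` consists exactly of the `K`-multiples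
of `∑ᵢ xᵢ yᵢ`, and the `K`-multiples of `y₁⋯y_N` are its `A[x]`-multiples,
this ideal is `im(d) + A[x₁,…,x_N]·y₁⋯y_N`. -/
theorem stmt_4 (A : Type) [CommRing A] [Algebra ℚ A] (N : ℕ) (f : Kos A N) :
    kosD f = 0 ↔ ∃ (g : Kos A N) (p : MvPolynomial (Fin N) A),
      f = kosD g + (fun S => if S = Finset.univ then p else 0) := by
  constructor
  · intro hf
    set g := kosScale (fun n => algebraMap ℚ A (n : ℚ)⁻¹) f
    have hg : kosD g = 0 := by rw [kosD_kosScale, hf, kosScale_zero]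
    have hL := kosD_kosH_add_kosH_kosD g
    rw [hg, kosH_zero, add_zero, kosScale_kosScale] at hL
    simp only [natCast_mul_algebraMap_inv] at hL
    exact ⟨kosH g, C (coeff 0 (f univ)), hL ▸ eq_kosScale_add_top f⟩
  · rintro ⟨g, p, rfl⟩
    rw [kosD_add, kosD_kosD, kosD_top, add_zero]
end
end
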